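/- arXiv:1812.06650 — 3 statements merged into one kernel-verified Lean document; each statement's English description precedes it below -/
import Mathlib

section
/- With all weights equal to 1, the generating function of Dyck N-excursions counted by length equals D^+(0,1;t) = (1 - 8t^2 - (1-12t^2) sqrt(1-8t^2)) / (8t^2 (1-9t^2)), with series expansion 1 + 4t^2 + 28t^4 + 224t^6 + 1888t^8 + ... -/
/-- A classical walk `v` is compatible with the N-walk `w` if they have the same
length and the `i`-th step of `v` belongs to the `i`-th N-step of `w`. -/
def Compatible (v : List ℤ) (w : List (Finset ℤ)) : Prop :=
  List.Forall₂ (· ∈ ·) v w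

/-- The reachable points of an N-walk: endpoints of all compatible classical walks. -/
def reach (w : List (Finset ℤ)) : Set ℤ :=
  {r | ∃ v : List ℤ, Compatible v w ∧ v.sum = r}

/-- Minimal reachable point. -/
noncomputable def wmin (w : List (Finset ℤ)) : ℤ := sInf (reach w)

/-- Maximal reachable point. -/
noncomputable def wmax (w : List (Finset ℤ)) : ℤ := sSup (reach w)

/-- A Dyck N-walk: every N-step is one of {-1}, {1}, {-1,1}. -/
def IsDyckNWalk (w : List (Finset ℤ)) : Prop :=
  ∀ s ∈ w, s = {-1} ∨ s = {1} ∨ s = ({-1, 1} : Finset ℤ)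

/-- A Motzkin N-walk: every N-step is a nonempty subset of {-1,0,1}. -/
def IsMotzkinNWalk (w : List (Finset ℤ)) : Prop :=
  ∀ s ∈ w, s.Nonempty ∧ s ⊆ ({-1, 0, 1} : Finset ℤ)

/-- A classical meander: all partial sums are nonnegative. -/
def IsMeanderW (v : List ℤ) : Prop := ∀ n : ℕ, 0 ≤ (v.take n).sum

/-- An N-bridge: compatible with at least one classical walk ending at 0. -/
def IsNBridge (w : List (Finset ℤ)) : Prop := ∃ v, Compatible v w ∧ v.sum = 0

/-- An N-meander: compatible with at least one classical meander. -/
def IsNMeander (w : List (Finset ℤ)) : Prop := ∃ v, Compatible v w ∧ IsMeanderW v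

/-- An N-excursion: compatible with at least one classical excursion. -/
def IsNExcursion (w : List (Finset ℤ)) : Prop :=
  ∃ v, Compatible v w ∧ IsMeanderW v ∧ v.sum = 0

/-- Number of Dyck N-excursions of length n. -/
noncomputable def dyckExcursionCount (n : ℕ) : ℕ :=
  Nat.card {w : List (Finset ℤ) // w.length = n ∧ IsDyckNWalk w ∧ IsNExcursion w}

/-!
The endpoints of the classical meanders compatible with a Dyck N-walk always form an arithmetic
progression `{a, a + 2, …, a + 2q}` (or the empty set), and appending an N-step maps such a
progression to another one. Hence Dyck N-excursions are the words accepted by a deterministic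
automaton on the states `(a, q)`, and the generating function of the words accepted from each
state is the unique bounded solution of the automaton's transfer equation: for `0 < t < 1/3` the
equation is a contraction, as every state has three successors. A solution of the form
`F X^a + G Y^a Z^q` is verified by algebra, and its value at `(0, 0)` is the claimed series.
-/

open Pointwise

namespace DFA

variable {α σ : Type*} (M : DFA α σ) [Fintype α] [DecidablePred (· ∈ M.accept)]

def countFrom : ℕ → σ → ℕ
  | 0, s => if s ∈ M.accept then 1 else 0
  | n + 1, s => ∑ a, countFrom n (M.step s a)

instance finite_acceptsFrom_length (n : ℕ) (s : σ) :
    Finite {x : List α // x.length = n ∧ x ∈ M.acceptsFrom s} :=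
  ((List.finite_length_eq α n).subset fun _ hx => hx.1).to_subtype

def consEquiv (n : ℕ) (s : σ) :
    (Σ a : α, {y : List α // y.length = n ∧ y ∈ M.acceptsFrom (M.step s a)}) ≃
      {x : List α // x.length = n + 1 ∧ x ∈ M.acceptsFrom s} where
  toFun p := ⟨p.1 :: p.2.1, by simp [p.2.2.1], p.2.2.2⟩
  invFun
    | ⟨a :: y, hx, hy⟩ => ⟨a, y, Nat.succ_injective hx, hy⟩
  left_inv _ := rfl
  right_inv
    | ⟨_ :: _, _, _⟩ => rfl

theorem card_acceptsFrom_length (n : ℕ) (s : σ) :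
    Nat.card {x : List α // x.length = n ∧ x ∈ M.acceptsFrom s} = M.countFrom n s := by
  induction n generalizing s with
  | zero =>
    simp only [countFrom, List.length_eq_zero_iff]
    split_ifs with h
    · exact Nat.card_eq_one_iff_exists.mpr ⟨⟨[], rfl, h⟩, fun ⟨_, hx, _⟩ => Subtype.ext hx⟩
    · exact Nat.card_eq_zero.mpr (.inl ⟨fun ⟨_, rfl, hacc⟩ => h hacc⟩)
  | succ n ih =>
    rw [← Nat.card_congr (M.consEquiv n s), Nat.card_sigma]
    simp only [ih, countFrom]

theorem countFrom_le_pow (n : ℕ) (s : σ) : M.countFrom n s ≤ Fintype.card α ^ n := by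
  induction n generalizing s with
  | zero => simp only [countFrom]; split_ifs <;> simp
  | succ n ih =>
    calc M.countFrom (n + 1) s = ∑ a, M.countFrom n (M.step s a) := rfl
      _ ≤ ∑ _a : α, Fintype.card α ^ n := Finset.sum_le_sum fun a _ => ih _
      _ = Fintype.card α ^ (n + 1) := by simp [pow_succ']

section GeneratingFunction

variable {M} {t : ℝ} (ht : 0 ≤ t) (hkt : Fintype.card α * t < 1)
include ht hkt

theorem summable_countFrom (s : σ) : Summable fun n => (M.countFrom n s : ℝ) * t ^ n := by
  refine .of_nonneg_of_le (fun n => by positivity) (fun n => ?_)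
    (summable_geometric_of_lt_one (by positivity) hkt)
  rw [mul_pow]
  gcongr
  exact_mod_cast M.countFrom_le_pow n s

theorem tsum_countFrom_eq (s : σ) :
    ∑' n, (M.countFrom n s : ℝ) * t ^ n =
      (if s ∈ M.accept then 1 else 0) +
        t * ∑ a, ∑' n, (M.countFrom n (M.step s a) : ℝ) * t ^ n := by
  have hshift (n : ℕ) : (M.countFrom (n + 1) s : ℝ) * t ^ (n + 1) =
      t * ∑ a, (M.countFrom n (M.step s a) : ℝ) * t ^ n := by
    simp only [countFrom, Nat.cast_sum, Finset.mul_sum, Finset.sum_mul, pow_succ]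
    exact Finset.sum_congr rfl fun _ _ => by ring
  rw [(summable_countFrom ht hkt s).tsum_eq_zero_add, tsum_congr hshift, tsum_mul_left,
    Summable.tsum_finsetSum fun a _ => summable_countFrom ht hkt _]
  simp only [countFrom]
  split_ifs <;> simp

theorem abs_tsum_countFrom_le (s : σ) :
    |∑' n, (M.countFrom n s : ℝ) * t ^ n| ≤ (1 - Fintype.card α * t)⁻¹ := by
  rw [abs_of_nonneg (tsum_nonneg fun n => by positivity),
    ← tsum_geometric_of_lt_one (by positivity) hkt]
  refine (summable_countFrom ht hkt s).tsum_le_tsum (fun n => ?_)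
    (summable_geometric_of_lt_one (by positivity) hkt)
  rw [mul_pow]
  gcongr
  exact_mod_cast M.countFrom_le_pow n s

omit [DecidablePred (· ∈ M.accept)] in
theorem eq_zero_of_eq_mul_sum {D : σ → ℝ} {B : ℝ} (hB : ∀ s, |D s| ≤ B)
    (hD : ∀ s, D s = t * ∑ a, D (M.step s a)) (s : σ) : D s = 0 := by
  have hdecay (n : ℕ) : ∀ s, |D s| ≤ B * (Fintype.card α * t) ^ n := by
    induction n with
    | zero => simpa using hB
    | succ n ih =>
      intro s
      calc |D s| ≤ t * ∑ a, |D (M.step s a)| := by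
            rw [hD, abs_mul, abs_of_nonneg ht]
            gcongr
            exact Finset.abs_sum_le_sum_abs _ _
        _ ≤ t * ∑ _a : α, B * (Fintype.card α * t) ^ n := by gcongr; exact ih _
        _ = B * (Fintype.card α * t) ^ (n + 1) := by
            simp only [Finset.sum_const, Finset.card_univ, nsmul_eq_mul]
            ring
  have hlim : Filter.Tendsto (fun n => B * (Fintype.card α * t) ^ n) Filter.atTop (nhds 0) := by
    simpa using (tendsto_pow_atTop_nhds_zero_of_lt_one (by positivity) hkt).const_mul B
  exact abs_nonpos_iff.mp (ge_of_tendsto' hlim fun n => hdecay n s)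

theorem hasSum_countFrom {W : σ → ℝ} {C : ℝ} (hW : ∀ s, |W s| ≤ C)
    (hfix : ∀ s, W s = (if s ∈ M.accept then 1 else 0) + t * ∑ a, W (M.step s a)) (s : σ) :
    HasSum (fun n => (M.countFrom n s : ℝ) * t ^ n) (W s) := by
  convert (summable_countFrom ht hkt s).hasSum using 1
  symm
  refine sub_eq_zero.mp (M.eq_zero_of_eq_mul_sum ht hkt (B := (1 - Fintype.card α * t)⁻¹ + C)
    (fun s => (abs_sub _ _).trans (add_le_add (abs_tsum_countFrom_le ht hkt s) (hW s)))
    (fun s => ?_) s)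
  rw [tsum_countFrom_eq ht hkt, hfix s, Finset.sum_sub_distrib]
  ring

end GeneratingFunction

end DFA

def meanderReach (w : List (Finset ℤ)) : Set ℤ :=
  {r | ∃ v, Compatible v w ∧ IsMeanderW v ∧ v.sum = r}

theorem compatible_append_singleton_iff {v : List ℤ} {w : List (Finset ℤ)} {s : Finset ℤ} :
    Compatible v (w ++ [s]) ↔ ∃ u y, Compatible u w ∧ y ∈ s ∧ v = u ++ [y] := by
  rw [Compatible, ← List.forall₂_reverse_iff, List.reverse_append, List.reverse_singleton,
    List.singleton_append, List.forall₂_cons_right_iff]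
  constructor
  · rintro ⟨y, u, hy, hu, hv⟩
    refine ⟨u.reverse, y, List.forall₂_reverse_iff.mp (by simpa using hu), hy, ?_⟩
    rw [← List.reverse_reverse v, hv, List.reverse_cons]
  · rintro ⟨u, y, hu, hy, rfl⟩
    exact ⟨y, u.reverse, hy, List.forall₂_reverse_iff.mpr hu, by simp⟩

theorem isMeanderW_append_singleton {v : List ℤ} {y : ℤ} :
    IsMeanderW (v ++ [y]) ↔ IsMeanderW v ∧ 0 ≤ v.sum + y := by
  have htake (n : ℕ) : (v ++ [y]).take n = if n ≤ v.length then v.take n else v ++ [y] := by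
    split_ifs with hn
    · exact List.take_append_of_le_length hn
    · exact List.take_of_length_le (by simp; omega)
  constructor
  · intro h
    refine ⟨fun n => ?_, by simpa [htake] using h (v.length + 1)⟩
    rcases le_or_gt n v.length with hn | hn
    · simpa [htake, hn] using h n
    · simpa [List.take_of_length_le hn.le, htake] using h v.length
  · rintro ⟨hv, hy⟩ n
    rw [htake]
    split_ifs
    · exact hv n
    · simpa using hy

theorem meanderReach_nil : meanderReach [] = {0} := by
  ext r
  simp [meanderReach, Compatible, IsMeanderW, eq_comm]

theorem meanderReach_append_singleton (w : List (Finset ℤ)) (s : Finset ℤ) :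
    meanderReach (w ++ [s]) = Set.Ici 0 ∩ (meanderReach w + (s : Set ℤ)) := by
  ext z
  simp only [meanderReach, compatible_append_singleton_iff, Set.mem_inter_iff, Set.mem_Ici,
    Set.mem_add, Set.mem_ofPred_eq, Finset.mem_coe]
  constructor
  · rintro ⟨_, ⟨u, y, hu, hy, rfl⟩, hm, rfl⟩
    rw [isMeanderW_append_singleton] at hm
    exact ⟨by simpa using hm.2, _, ⟨u, hu, hm.1, rfl⟩, y, hy, by simp⟩
  · rintro ⟨hz, _, ⟨u, hu, hm, rfl⟩, y, hy, rfl⟩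
    exact ⟨u ++ [y], ⟨u, y, hu, hy, rfl⟩, isMeanderW_append_singleton.mpr ⟨hm, hz⟩, by simp⟩

inductive DyckNStep | down | up | both
  deriving DecidableEq

def DyckNStep.toFinset : DyckNStep → Finset ℤ
  | down => {-1}
  | up => {1}
  | both => {-1, 1}

instance : Fintype DyckNStep :=
  ⟨{.down, .up, .both}, fun ℓ => by cases ℓ <;> decide⟩

theorem card_dyckNStep : Fintype.card DyckNStep = 3 := rfl

theorem DyckNStep.sum_univ {β : Type*} [AddCommMonoid β] (f : DyckNStep → β) :
    ∑ ℓ, f ℓ = f .down + f .up + f .both := by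
  rw [show (Finset.univ : Finset DyckNStep) = {.down, .up, .both} from rfl,
    Finset.sum_insert (by decide), Finset.sum_pair (by decide), add_assoc]

theorem DyckNStep.toFinset_injective : Function.Injective DyckNStep.toFinset := by
  intro ℓ ℓ' h
  cases ℓ <;> cases ℓ' <;> first | rfl | exact absurd h (by decide)

theorem isDyckNWalk_iff_mem_range (w : List (Finset ℤ)) :
    IsDyckNWalk w ↔ w ∈ Set.range (List.map DyckNStep.toFinset) := by
  have hrange (s : Finset ℤ) :
      s ∈ Set.range DyckNStep.toFinset ↔ s = {-1} ∨ s = {1} ∨ s = ({-1, 1} : Finset ℤ) := by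
    constructor
    · rintro ⟨ℓ, rfl⟩
      cases ℓ <;> simp [DyckNStep.toFinset]
    · rintro (rfl | rfl | rfl)
      exacts [⟨.down, rfl⟩, ⟨.up, rfl⟩, ⟨.both, rfl⟩]
  simp only [Set.range_list_map, Set.mem_ofPred_eq, hrange, IsDyckNWalk]

def progression : Option (ℕ × ℕ) → Set ℤ
  | none => ∅
  | some (a, q) => {z | a ≤ z ∧ z ≤ a + 2 * q ∧ 2 ∣ z - a}

def progressionStep : ℕ × ℕ → DyckNStep → Option (ℕ × ℕ)
  | (0, 0), .down => none
  | (0, q + 1), .down => some (1, q)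
  | (a + 1, q), .down => some (a, q)
  | (a, q), .up => some (a + 1, q)
  | (0, q), .both => some (1, q)
  | (a + 1, q), .both => some (a, q + 1)

/-- Reading a Dyck N-walk, the state `o` records the set `progression o` of endpoints of the
classical meanders compatible with it: `some (a, q)` stands for `{a, a + 2, …, a + 2q}`. -/
def dyckMeanderDFA : DFA DyckNStep (Option (ℕ × ℕ)) where
  step o ℓ := o.bind (progressionStep · ℓ)
  start := some (0, 0)
  accept := {o | o.map Prod.fst = some 0}

instance : DecidablePred (· ∈ dyckMeanderDFA.accept) :=
  fun o => inferInstanceAs (Decidable (o.map Prod.fst = some 0))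

theorem progression_step (o : Option (ℕ × ℕ)) (ℓ : DyckNStep) :
    progression (dyckMeanderDFA.step o ℓ) =
      Set.Ici 0 ∩ (progression o + (ℓ.toFinset : Set ℤ)) := by
  ext z
  have mem_add_iff (S T : Set ℤ) : z ∈ S + T ↔ ∃ y ∈ T, z - y ∈ S :=
    ⟨fun ⟨x, hx, y, hy, h⟩ => ⟨y, hy, by rwa [← h, add_sub_cancel_right]⟩,
      fun ⟨y, hy, h⟩ => ⟨z - y, h, y, hy, sub_add_cancel z y⟩⟩
  rcases o with _ | ⟨a, q⟩
  · simp [dyckMeanderDFA, progression]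
  cases ℓ <;> cases a <;> cases q <;>
    simp only [dyckMeanderDFA, Option.bind_some, progressionStep, progression,
      DyckNStep.toFinset, Set.mem_inter_iff, Set.mem_Ici, mem_add_iff, Finset.coe_insert,
      Finset.coe_singleton, Set.mem_insert_iff, Set.mem_singleton_iff, exists_eq_or_imp,
      exists_eq_left, Set.mem_ofPred_eq, Set.mem_empty_iff_false, false_iff, Nat.zero_eq] <;>
    omega

theorem progression_start : progression dyckMeanderDFA.start = {0} := by
  ext z
  simp only [dyckMeanderDFA, progression, Set.mem_ofPred_eq, Set.mem_singleton_iff]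
  omega

theorem zero_mem_progression_iff (o : Option (ℕ × ℕ)) :
    0 ∈ progression o ↔ o ∈ dyckMeanderDFA.accept := by
  rcases o with _ | ⟨a, q⟩
  · simp [progression, dyckMeanderDFA]
  · simp only [progression, dyckMeanderDFA, Set.mem_ofPred_eq, Option.map_some, Option.some.injEq]
    omega

theorem meanderReach_map_toFinset (x : List DyckNStep) :
    meanderReach (x.map DyckNStep.toFinset) = progression (dyckMeanderDFA.eval x) := by
  induction x using List.reverseRecOn with
  | nil => rw [List.map_nil, meanderReach_nil, DFA.eval_nil, progression_start]
  | append_singleton x ℓ ih =>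
    rw [List.map_append, List.map_singleton, meanderReach_append_singleton, ih,
      DFA.eval_append_singleton, progression_step]

theorem isNExcursion_map_toFinset_iff (x : List DyckNStep) :
    IsNExcursion (x.map DyckNStep.toFinset) ↔ x ∈ dyckMeanderDFA.accepts := by
  change 0 ∈ meanderReach _ ↔ _
  rw [meanderReach_map_toFinset, zero_mem_progression_iff, DFA.mem_accepts]

theorem dyckExcursionCount_eq_countFrom (n : ℕ) :
    dyckExcursionCount n = dyckMeanderDFA.countFrom n dyckMeanderDFA.start := by
  have himage : {w | w.length = n ∧ IsDyckNWalk w ∧ IsNExcursion w} =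
      List.map DyckNStep.toFinset '' {x | x.length = n ∧ x ∈ dyckMeanderDFA.accepts} := by
    ext w
    simp only [isDyckNWalk_iff_mem_range, Set.mem_ofPred_eq, Set.mem_image, Set.mem_range]
    constructor
    · rintro ⟨hn, ⟨x, rfl⟩, hx⟩
      exact ⟨x, ⟨by simpa using hn, (isNExcursion_map_toFinset_iff x).mp hx⟩, rfl⟩
    · rintro ⟨x, ⟨hn, hx⟩, rfl⟩
      exact ⟨by simpa using hn, ⟨x, rfl⟩, (isNExcursion_map_toFinset_iff x).mpr hx⟩
  calc dyckExcursionCount n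
      = Nat.card (List.map DyckNStep.toFinset ''
          {x | x.length = n ∧ x ∈ dyckMeanderDFA.accepts}) := by
        rw [← himage]; rfl
    _ = Nat.card {x : List DyckNStep // x.length = n ∧ x ∈ dyckMeanderDFA.accepts} :=
        Nat.card_image_of_injective (List.map_injective_iff.mpr DyckNStep.toFinset_injective) _
    _ = dyckMeanderDFA.countFrom n dyckMeanderDFA.start :=
        dyckMeanderDFA.card_acceptsFrom_length n _

namespace DyckNExcursion

noncomputable section

variable (t : ℝ)

def sqrtDisc : ℝ := √(1 - 8 * t ^ 2)

def rootX : ℝ := (1 - sqrtDisc t) / (2 * t)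

def rootY : ℝ := (1 - 4 * t ^ 2 - sqrtDisc t) / (2 * t * (1 - sqrtDisc t))

def rootZ : ℝ := (1 - 4 * t ^ 2 - sqrtDisc t) / (8 * t ^ 2)

def coeffF : ℝ := 2 / (3 * sqrtDisc t - 1)

def coeffG : ℝ := -(1 - sqrtDisc t) ^ 2 / (4 * t ^ 2 * (3 * sqrtDisc t - 1))

/-- Away from the boundary `a = 0`, the transfer equation
`W (a + 1, q) = t * (W (a, q) + W (a + 2, q) + W (a, q + 1))` is solved by `X ^ a` when
`X = t * (X ^ 2 + 2)` and by `Y ^ a * Z ^ q` when `Y = t * (Y ^ 2 + 1 + Z)`; the equations at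
`a = 0` then determine `Z`, `F` and `G`. -/
def solution : Option (ℕ × ℕ) → ℝ
  | none => 0
  | some (a, q) => coeffF t * rootX t ^ a + coeffG t * rootY t ^ a * rootZ t ^ q

end

theorem sqrtDisc_nonneg (t : ℝ) : 0 ≤ sqrtDisc t := Real.sqrt_nonneg _

variable {t : ℝ} (ht0 : 0 < t) (ht3 : t < 1 / 3)
include ht0 ht3

theorem sq_sqrtDisc : sqrtDisc t ^ 2 = 1 - 8 * t ^ 2 := Real.sq_sqrt (by nlinarith)

theorem one_third_lt_sqrtDisc : 1 / 3 < sqrtDisc t := by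
  nlinarith [sq_sqrtDisc ht0 ht3, sqrtDisc_nonneg t]

theorem sqrtDisc_lt_one : sqrtDisc t < 1 := by
  nlinarith [sq_sqrtDisc ht0 ht3, sqrtDisc_nonneg t]

theorem sqrtDisc_lt_one_sub_four_mul_sq : sqrtDisc t < 1 - 4 * t ^ 2 := by
  have h := sq_sqrtDisc ht0 ht3
  have hb : 0 < 1 - 4 * t ^ 2 + sqrtDisc t := by nlinarith [sqrtDisc_nonneg t]
  have key : (1 - 4 * t ^ 2 - sqrtDisc t) * (1 - 4 * t ^ 2 + sqrtDisc t) = 16 * t ^ 4 := by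
    linear_combination -h
  nlinarith [pow_pos ht0 4]

theorem rootX_pos : 0 < rootX t :=
  div_pos (by linarith [sqrtDisc_lt_one ht0 ht3]) (by positivity)

theorem rootX_lt_one : rootX t < 1 := by
  rw [rootX, div_lt_one (by positivity)]
  nlinarith [sq_sqrtDisc ht0 ht3, one_third_lt_sqrtDisc ht0 ht3]

theorem rootY_pos : 0 < rootY t :=
  div_pos (by linarith [sqrtDisc_lt_one_sub_four_mul_sq ht0 ht3])
    (by nlinarith [sqrtDisc_lt_one ht0 ht3])

theorem rootY_lt_one : rootY t < 1 := by
  have h := sq_sqrtDisc ht0 ht3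
  have h1 := one_third_lt_sqrtDisc ht0 ht3
  have h2 := sqrtDisc_lt_one ht0 ht3
  have ha : 0 < sqrtDisc t * (1 - 2 * t) := by nlinarith
  have key : (sqrtDisc t * (1 - 2 * t)) ^ 2 - (1 - 2 * t - 4 * t ^ 2) ^ 2 =
      16 * t ^ 3 * (1 - 3 * t) := by
    linear_combination (1 - 2 * t) ^ 2 * h
  rw [rootY, div_lt_one (by nlinarith)]
  nlinarith [mul_pos (pow_pos ht0 3) (show (0 : ℝ) < 1 - 3 * t by linarith)]

theorem rootZ_pos : 0 < rootZ t :=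
  div_pos (by linarith [sqrtDisc_lt_one_sub_four_mul_sq ht0 ht3]) (by positivity)

theorem rootZ_lt_one : rootZ t < 1 := by
  rw [rootZ, div_lt_one (by positivity)]
  nlinarith [sq_sqrtDisc ht0 ht3, one_third_lt_sqrtDisc ht0 ht3]

theorem rootX_eq : rootX t = t * (rootX t ^ 2 + 2) := by
  rw [rootX]
  field_simp
  linear_combination -sq_sqrtDisc ht0 ht3

theorem rootY_eq : rootY t = t * (rootY t ^ 2 + 1 + rootZ t) := by
  have hs1 : 1 - sqrtDisc t ≠ 0 := (sub_pos.mpr (sqrtDisc_lt_one ht0 ht3)).ne'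
  rw [rootZ, rootY]
  field_simp
  linear_combination (-4 - 16 * t ^ 2 + 4 * sqrtDisc t) * sq_sqrtDisc ht0 ht3

theorem rootZ_eq : rootZ t = t * rootY t * (2 * rootZ t + 1) := by
  have hs1 : 1 - sqrtDisc t ≠ 0 := (sub_pos.mpr (sqrtDisc_lt_one ht0 ht3)).ne'
  rw [rootZ, rootY]
  field_simp
  ring

theorem coeffF_eq : coeffF t = 1 + 3 * t * coeffF t * rootX t := by
  have h31 : 3 * sqrtDisc t - 1 ≠ 0 := by linarith [one_third_lt_sqrtDisc ht0 ht3]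
  rw [coeffF, rootX]
  field_simp
  ring

theorem coeffF_add_coeffG_eq :
    coeffF t + coeffG t = 1 + 2 * t * (coeffF t * rootX t + coeffG t * rootY t) := by
  have hs1 : 1 - sqrtDisc t ≠ 0 := (sub_pos.mpr (sqrtDisc_lt_one ht0 ht3)).ne'
  have h31 : 3 * sqrtDisc t - 1 ≠ 0 := by linarith [one_third_lt_sqrtDisc ht0 ht3]
  rw [coeffF, coeffG, rootX, rootY]
  field_simp
  ring

theorem solution_start :
    solution t dyckMeanderDFA.start =
      (1 - 8 * t ^ 2 - (1 - 12 * t ^ 2) * √(1 - 8 * t ^ 2)) / (8 * t ^ 2 * (1 - 9 * t ^ 2)) := by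
  have h := sq_sqrtDisc ht0 ht3
  have h31 : 3 * sqrtDisc t - 1 ≠ 0 := by linarith [one_third_lt_sqrtDisc ht0 ht3]
  have h9 : 1 - 9 * t ^ 2 ≠ 0 := by nlinarith
  change coeffF t * rootX t ^ 0 + coeffG t * rootY t ^ 0 * rootZ t ^ 0 = _
  rw [coeffF, coeffG, ← sqrtDisc]
  field_simp
  rw [eq_div_iff (by nlinarith)]
  linear_combination (4 - 72 * t ^ 2) * h

theorem solution_eq (o : Option (ℕ × ℕ)) :
    solution t o = (if o ∈ dyckMeanderDFA.accept then 1 else 0) +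
      t * ∑ ℓ, solution t (dyckMeanderDFA.step o ℓ) := by
  rw [DyckNStep.sum_univ]
  rcases o with _ | ⟨_ | a, q⟩
  · simp [solution, dyckMeanderDFA]
  all_goals simp only [solution, dyckMeanderDFA, progressionStep, Option.bind_some,
    Set.mem_ofPred_eq, Option.map_some, Option.some.injEq]
  · simp only [if_pos]
    rcases q with _ | q
    · linear_combination coeffF_add_coeffG_eq ht0 ht3
    · linear_combination coeffF_eq ht0 ht3 + coeffG t * rootZ t ^ q * rootZ_eq ht0 ht3
  · simp only [Nat.add_one_ne_zero, if_false]
    linear_combination coeffF t * rootX t ^ a * rootX_eq ht0 ht3 +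
      coeffG t * rootY t ^ a * rootZ t ^ q * rootY_eq ht0 ht3

theorem abs_solution_le (o : Option (ℕ × ℕ)) : |solution t o| ≤ |coeffF t| + |coeffG t| := by
  have hpow {x : ℝ} (hx0 : 0 < x) (hx1 : x < 1) (n : ℕ) : |x ^ n| ≤ 1 := by
    rw [abs_pow, abs_of_pos hx0]; exact pow_le_one₀ hx0.le hx1.le
  rcases o with _ | ⟨a, q⟩
  · simp only [solution, abs_zero]; positivity
  calc |coeffF t * rootX t ^ a + coeffG t * rootY t ^ a * rootZ t ^ q|
      ≤ |coeffF t| * |rootX t ^ a| + |coeffG t| * |rootY t ^ a| * |rootZ t ^ q| := by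
        simpa only [abs_mul] using
          abs_add_le (coeffF t * rootX t ^ a) (coeffG t * rootY t ^ a * rootZ t ^ q)
    _ ≤ |coeffF t| * 1 + |coeffG t| * 1 * 1 := by
        gcongr
        exacts [hpow (rootX_pos ht0 ht3) (rootX_lt_one ht0 ht3) a,
          hpow (rootY_pos ht0 ht3) (rootY_lt_one ht0 ht3) a,
          hpow (rootZ_pos ht0 ht3) (rootZ_lt_one ht0 ht3) q]
    _ = |coeffF t| + |coeffG t| := by ring

end DyckNExcursion

/-- with all weights 1,
D⁺(0,1;t) = (1 - 8t² - (1-12t²)√(1-8t²)) / (8t²(1-9t²)),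
with expansion 1 + 4t² + 28t⁴ + 224t⁶ + 1888t⁸ + ⋯ . -/
theorem dyck_excursion_gf :
    dyckExcursionCount 0 = 1 ∧ dyckExcursionCount 2 = 4 ∧ dyckExcursionCount 4 = 28 ∧
    dyckExcursionCount 6 = 224 ∧ dyckExcursionCount 8 = 1888 ∧
    ∀ t : ℝ, 0 < t → t < 1 / 3 →
      HasSum (fun n : ℕ => (dyckExcursionCount n : ℝ) * t ^ n)
        ((1 - 8 * t ^ 2 - (1 - 12 * t ^ 2) * Real.sqrt (1 - 8 * t ^ 2)) /
          (8 * t ^ 2 * (1 - 9 * t ^ 2))) := by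
  simp only [dyckExcursionCount_eq_countFrom]
  refine ⟨by decide, by decide, by decide, by decide, by decide, fun t ht0 ht3 => ?_⟩
  have hsum := dyckMeanderDFA.hasSum_countFrom ht0.le
    (by rw [card_dyckNStep]; push_cast; linarith) (DyckNExcursion.abs_solution_le ht0 ht3)
    (DyckNExcursion.solution_eq ht0 ht3) dyckMeanderDFA.start
  rwa [DyckNExcursion.solution_start ht0 ht3] at hsum
end

section
/- A Motzkin N-walk is of type 1 (its set of reachable points is {min(w), min(w)+2, ..., max(w)}) if and only if all of its N-steps belong to {{-1},{0},{1},{-1,1}}; otherwise (if it contains at least one N-step among {-1,0}, {0,1}, {-1,0,1}) its set of reachable points is the full interval of integers [min(w), max(w)] with max(w) - min(w) ≥ 1. -/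
def lo (s : Finset ℤ) : ℤ := if h : s.Nonempty then s.min' h else 0
def hi (s : Finset ℤ) : ℤ := if h : s.Nonempty then s.max' h else 0

example : lo ({-1,0}:Finset ℤ) = -1 := by decide
example : hi ({-1,0,1}:Finset ℤ) = 1 := by decide

lemma classify (s : Finset ℤ) (h1 : s.Nonempty) (h2 : s ⊆ ({-1,0,1} : Finset ℤ)) :
    s = {-1} ∨ s = {0} ∨ s = {1} ∨ s = {-1,0} ∨ s = ({-1,1}:Finset ℤ) ∨ s = {0,1} ∨ s = ({-1,0,1}:Finset ℤ) := by
  have h := Finset.mem_powerset.mpr h2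
  fin_cases h <;> simp_all <;> decide

lemma mem_reach_cons {s : Finset ℤ} {w : List (Finset ℤ)} {r : ℤ} :
    r ∈ reach (s :: w) ↔ ∃ a ∈ s, ∃ t ∈ reach w, a + t = r := by
  constructor
  · rintro ⟨v, hv, rfl⟩
    cases hv with
    | cons ha hv' => exact ⟨_, ha, _, ⟨_, hv', rfl⟩, by simp⟩
  · rintro ⟨a, ha, t, ⟨v, hv, rfl⟩, rfl⟩
    exact ⟨a :: v, List.Forall₂.cons ha hv, by simp⟩

lemma mem_reach_nil {r : ℤ} : r ∈ reach ([] : List (Finset ℤ)) ↔ r = 0 := by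
  constructor
  · rintro ⟨v, hv, rfl⟩; cases hv; simp
  · rintro rfl; exact ⟨[], List.Forall₂.nil, rfl⟩

lemma lo_mem {s : Finset ℤ} (h : s.Nonempty) : lo s ∈ s := by
  rw [lo, dif_pos h]; exact s.min'_mem h

lemma hi_mem {s : Finset ℤ} (h : s.Nonempty) : hi s ∈ s := by
  rw [hi, dif_pos h]; exact s.max'_mem h

lemma lo_le {s : Finset ℤ} {a : ℤ} (h : a ∈ s) : lo s ≤ a := by
  rw [lo, dif_pos ⟨a, h⟩]; exact Finset.min'_le _ _ h

lemma le_hi {s : Finset ℤ} {a : ℤ} (h : a ∈ s) : a ≤ hi s := by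
  rw [hi, dif_pos ⟨a, h⟩]; exact Finset.le_max' _ _ h

def LL (w : List (Finset ℤ)) : ℤ := (w.map lo).sum
def HH (w : List (Finset ℤ)) : ℤ := (w.map hi).sum

@[simp] lemma LL_nil : LL [] = 0 := rfl
@[simp] lemma HH_nil : HH [] = 0 := rfl
@[simp] lemma LL_cons {s w} : LL (s :: w) = lo s + LL w := by simp [LL]
@[simp] lemma HH_cons {s w} : HH (s :: w) = hi s + HH w := by simp [HH]


lemma reach_bounds {w : List (Finset ℤ)} {r : ℤ} (hr : r ∈ reach w) :
    LL w ≤ r ∧ r ≤ HH w := by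
  induction w generalizing r with
  | nil => rw [mem_reach_nil] at hr; simp [hr]
  | cons s w ih =>
    rw [mem_reach_cons] at hr
    obtain ⟨a, ha, t, ht, rfl⟩ := hr
    have h1 := lo_le ha
    have h2 := le_hi ha
    have h3 := ih ht
    simp only [LL_cons, HH_cons]
    omega

lemma LL_mem {w : List (Finset ℤ)} (hw : IsMotzkinNWalk w) : LL w ∈ reach w := by
  induction w with
  | nil => rw [mem_reach_nil]; rfl
  | cons s w ih =>
    rw [mem_reach_cons]
    exact ⟨lo s, lo_mem (hw s (by simp)).1, LL w,
      ih (fun t ht => hw t (by simp [ht])), by simp⟩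

lemma HH_mem {w : List (Finset ℤ)} (hw : IsMotzkinNWalk w) : HH w ∈ reach w := by
  induction w with
  | nil => rw [mem_reach_nil]; rfl
  | cons s w ih =>
    rw [mem_reach_cons]
    exact ⟨hi s, hi_mem (hw s (by simp)).1, HH w,
      ih (fun t ht => hw t (by simp [ht])), by simp⟩


lemma wmin_eq {w : List (Finset ℤ)} (hw : IsMotzkinNWalk w) : wmin w = LL w :=
  IsLeast.csInf_eq ⟨LL_mem hw, fun r hr => (reach_bounds hr).1⟩

lemma wmax_eq {w : List (Finset ℤ)} (hw : IsMotzkinNWalk w) : wmax w = HH w :=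
  IsGreatest.csSup_eq ⟨HH_mem hw, fun r hr => (reach_bounds hr).2⟩

def Pure1 (w : List (Finset ℤ)) : Prop :=
  ∀ s ∈ w, s = {-1} ∨ s = {0} ∨ s = {1} ∨ s = ({-1, 1} : Finset ℤ)

def Impure (s : Finset ℤ) : Prop :=
  s = ({-1, 0} : Finset ℤ) ∨ s = ({0, 1} : Finset ℤ) ∨ s = ({-1, 0, 1} : Finset ℤ)

lemma pure_step {s : Finset ℤ}
    (h : s = {-1} ∨ s = {0} ∨ s = {1} ∨ s = ({-1, 1} : Finset ℤ)) :
    (∀ a ∈ s, 2 ∣ (a - lo s)) ∧ (hi s = lo s ∨ hi s = lo s + 2) := by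
  rcases h with rfl | rfl | rfl | rfl <;> decide

lemma impure_step {s : Finset ℤ} (h : Impure s) :
    lo s ∈ s ∧ lo s + 1 ∈ s ∧ (hi s = lo s + 1 ∨ (hi s = lo s + 2 ∧ lo s + 2 ∈ s)) := by
  rcases h with rfl | rfl | rfl <;> decide

lemma pure_span {w : List (Finset ℤ)} (hp : Pure1 w) :
    LL w ≤ HH w ∧ 2 ∣ (HH w - LL w) := by
  induction w with
  | nil => simp
  | cons s w ih =>
    have hs := hp s (by simp)
    have ihw := ih (fun t ht => hp t (by simp [ht]))
    have := (pure_step hs).2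
    simp only [LL_cons, HH_cons]
    omega

lemma pure_reach {w : List (Finset ℤ)} (hp : Pure1 w) :
    reach w = {r : ℤ | LL w ≤ r ∧ r ≤ HH w ∧ 2 ∣ (r - LL w)} := by
  induction w with
  | nil =>
    ext r; rw [mem_reach_nil]; simp only [Set.mem_setOf_eq, LL_nil, HH_nil]
    omega
  | cons s w ih =>
    have hs := hp s (by simp)
    have hw : Pure1 w := fun t ht => hp t (by simp [ht])
    have hsne : s.Nonempty := by
      rcases hs with rfl | rfl | rfl | rfl <;> decide
    obtain ⟨hpar, hspan⟩ := pure_step hs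
    obtain ⟨hle, hdvd⟩ := pure_span hw
    ext r
    rw [mem_reach_cons]
    simp only [ih hw, Set.mem_setOf_eq, LL_cons, HH_cons]
    constructor
    · rintro ⟨a, ha, t, ⟨h1, h2, h3⟩, rfl⟩
      have h4 := hpar a ha
      have h5 := lo_le ha
      have h6 := le_hi ha
      omega
    · rintro ⟨h1, h2, h3⟩
      by_cases hc : r - lo s ≤ HH w
      · exact ⟨lo s, lo_mem hsne, r - lo s, ⟨by omega, hc, by omega⟩, by omega⟩
      · exact ⟨hi s, hi_mem hsne, r - hi s, ⟨by omega, by omega, by omega⟩, by omega⟩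

lemma motzkin_step {s : Finset ℤ} (h1 : s.Nonempty) (h2 : s ⊆ ({-1,0,1} : Finset ℤ)) :
    hi s ≤ lo s + 2 := by
  rcases classify s h1 h2 with rfl | rfl | rfl | rfl | rfl | rfl | rfl <;> decide

lemma impure_reach {w : List (Finset ℤ)} (hw : IsMotzkinNWalk w)
    (himp : ∃ s ∈ w, Impure s) :
    reach w = Set.Icc (LL w) (HH w) ∧ 1 ≤ HH w - LL w := by
  induction w with
  | nil => simp at himp
  | cons s w ih =>
    have hs := hw s (by simp)
    have hw' : IsMotzkinNWalk w := fun t ht => hw t (by simp [ht])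
    have hlos := lo_mem hs.1
    have hhis := hi_mem hs.1
    have hlohi : lo s ≤ hi s := le_hi hlos
    have hspan : hi s ≤ lo s + 2 := motzkin_step hs.1 hs.2
    by_cases himp' : ∃ t ∈ w, Impure t
    · obtain ⟨hre, hge⟩ := ih hw' himp'
      constructor
      · ext r
        rw [mem_reach_cons]
        simp only [hre, Set.mem_Icc, LL_cons, HH_cons]
        constructor
        · rintro ⟨a, ha, t, ⟨h1, h2⟩, rfl⟩
          have h5 := lo_le ha
          have h6 := le_hi ha
          omega
        · rintro ⟨h1, h2⟩
          by_cases hc : r - lo s ≤ HH w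
          · exact ⟨lo s, hlos, r - lo s, ⟨by omega, hc⟩, by omega⟩
          · exact ⟨hi s, hhis, r - hi s, ⟨by omega, by omega⟩, by omega⟩
      · simp only [LL_cons, HH_cons]; omega
    · -- s itself is impure, w is pure
      have hsimp : Impure s := by
        obtain ⟨t, ht, htimp⟩ := himp
        rcases List.mem_cons.mp ht with rfl | ht'
        · exact htimp
        · exact absurd ⟨t, ht', htimp⟩ himp'
      have hwp : Pure1 w := by
        intro t ht
        rcases classify t (hw' t ht).1 (hw' t ht).2 with h|h|h|h|h|h|h
        · exact Or.inl h
        · exact Or.inr (Or.inl h)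
        · exact Or.inr (Or.inr (Or.inl h))
        · exact absurd ⟨t, ht, Or.inl h⟩ himp'
        · exact Or.inr (Or.inr (Or.inr h))
        · exact absurd ⟨t, ht, Or.inr (Or.inl h)⟩ himp'
        · exact absurd ⟨t, ht, Or.inr (Or.inr h)⟩ himp'
      obtain ⟨hlo0, hlo1, hhic⟩ := impure_step hsimp
      obtain ⟨hle, hdvd⟩ := pure_span hwp
      have hre := pure_reach hwp
      constructor
      · ext r
        rw [mem_reach_cons]
        simp only [hre, Set.mem_setOf_eq, Set.mem_Icc, LL_cons, HH_cons]
        constructor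
        · rintro ⟨a, ha, t, ⟨h1, h2, _⟩, rfl⟩
          have h5 := lo_le ha
          have h6 := le_hi ha
          omega
        · rintro ⟨h1, h2⟩
          by_cases hc : r ≤ lo s + 1 + HH w
          · by_cases hp : 2 ∣ (r - lo s - LL w)
            · exact ⟨lo s, hlo0, r - lo s, ⟨by omega, by omega, by omega⟩, by omega⟩
            · exact ⟨lo s + 1, hlo1, r - lo s - 1, ⟨by omega, by omega, by omega⟩, by omega⟩
          · have hhi2 : hi s = lo s + 2 ∧ lo s + 2 ∈ s := by
              rcases hhic with h | h
              · omega
              · exact h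
            exact ⟨lo s + 2, hhi2.2, HH w, ⟨by omega, le_refl _, by omega⟩, by omega⟩
      · simp only [LL_cons, HH_cons]; omega

/-- a Motzkin N-walk has reachable-point set
{min(w), min(w)+2, …, max(w)} (type 1) iff all its N-steps are among
{-1}, {0}, {1}, {-1,1}; otherwise its reachable points fill the whole integer
interval [min(w), max(w)] and max(w) - min(w) ≥ 1. -/
theorem motzkin_structure (w : List (Finset ℤ)) (hw : IsMotzkinNWalk w) :
    ((∀ s ∈ w, s = {-1} ∨ s = {0} ∨ s = {1} ∨ s = ({-1, 1} : Finset ℤ)) ↔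
      reach w = {r : ℤ | wmin w ≤ r ∧ r ≤ wmax w ∧ ∃ i : ℤ, r = wmin w + 2 * i}) ∧
    ((∃ s ∈ w, s = ({-1, 0} : Finset ℤ) ∨ s = ({0, 1} : Finset ℤ) ∨
        s = ({-1, 0, 1} : Finset ℤ)) →
      reach w = Set.Icc (wmin w) (wmax w) ∧ 1 ≤ wmax w - wmin w) := by
  have hmin := wmin_eq hw
  have hmax := wmax_eq hw
  have hset : {r : ℤ | wmin w ≤ r ∧ r ≤ wmax w ∧ ∃ i : ℤ, r = wmin w + 2 * i}
      = {r : ℤ | LL w ≤ r ∧ r ≤ HH w ∧ 2 ∣ (r - LL w)} := by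
    rw [hmin, hmax]; ext r; simp only [Set.mem_setOf_eq]
    constructor
    · rintro ⟨a, b, i, rfl⟩; exact ⟨a, b, ⟨i, by ring⟩⟩
    · rintro ⟨a, b, i, h⟩; exact ⟨a, b, i, by omega⟩
  constructor
  · constructor
    · intro hp; rw [hset]; exact pure_reach hp
    · intro hr s hsmem
      by_contra hne
      push_neg at hne
      obtain ⟨hn1, hn2, hn3, hn4⟩ := hne
      have himp : Impure s := by
        rcases classify s (hw s hsmem).1 (hw s hsmem).2 with h|h|h|h|h|h|h
        · exact absurd h hn1
        · exact absurd h hn2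
        · exact absurd h hn3
        · exact Or.inl h
        · exact absurd h hn4
        · exact Or.inr (Or.inl h)
        · exact Or.inr (Or.inr h)
      obtain ⟨hic, hge⟩ := impure_reach hw ⟨s, hsmem, himp⟩
      have hmem : (LL w + 1) ∈ reach w := by
        rw [hic]; exact Set.mem_Icc.mpr ⟨by omega, by omega⟩
      rw [hr, hset] at hmem
      obtain ⟨_, _, hd⟩ := hmem
      omega
  · intro hex
    obtain ⟨hic, hge⟩ := impure_reach hw hex
    rw [hmin, hmax]
    exact ⟨hic, by omega⟩
end

section
/- With all weights equal to 1, the generating function of Motzkin N-meanders counted by length equals (10t - 1 + sqrt((1+2t)(1-6t))) / (8t(1-7t)). -/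
/-- Number of Motzkin N-meanders of length n. -/
noncomputable def motzkinMeanderCount (n : ℕ) : ℕ :=
  Nat.card {w : List (Finset ℤ) // w.length = n ∧ IsMotzkinNWalk w ∧ IsNMeander w}

/-! A Motzkin N-walk is an N-meander iff its greedy walk, which always takes the largest allowed
step, is a meander. Among the seven N-steps, four have largest step `1`, two `0` and one `-1`, so
the generating functions `G h` of the meanders started at height `h` satisfy
`G h = 1 + t (4 G (h + 1) + 2 G h + G (h - 1))` with `G (-1) = 0`. Then `G (h - 1) - (1 - 7t)⁻¹`
is a bounded solution of the homogeneous recurrence, hence a multiple of `λ ^ h` for the small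
root `λ` of the kernel, which gives `G 0 = (1 - λ) / (1 - 7t)`. -/

def maxStep (s : Finset ℤ) : ℤ := if 1 ∈ s then 1 else if 0 ∈ s then 0 else -1

def motzkinSteps : Finset (Finset ℤ) := ({-1, 0, 1} : Finset ℤ).powerset.erase ∅

lemma mem_motzkinSteps {s : Finset ℤ} :
    s ∈ motzkinSteps ↔ s.Nonempty ∧ s ⊆ ({-1, 0, 1} : Finset ℤ) := by
  simp [motzkinSteps, Finset.nonempty_iff_ne_empty]

lemma isMotzkinNWalk_iff {w : List (Finset ℤ)} :
    IsMotzkinNWalk w ↔ ∀ s ∈ w, s ∈ motzkinSteps := by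
  simp only [IsMotzkinNWalk, mem_motzkinSteps]

lemma maxStep_mem {s : Finset ℤ} (hs : s ∈ motzkinSteps) : maxStep s ∈ s := by
  revert s; decide

lemma le_maxStep {s : Finset ℤ} (hs : s ∈ motzkinSteps) {x : ℤ} (hx : x ∈ s) : x ≤ maxStep s := by
  obtain ⟨-, hsub⟩ := mem_motzkinSteps.mp hs
  have hx' := hsub hx
  simp only [Finset.mem_insert, Finset.mem_singleton] at hx'
  unfold maxStep
  rcases hx' with rfl | rfl | rfl <;> split_ifs <;> simp_all

lemma sum_motzkinSteps_maxStep {M : Type*} [AddCommMonoid M] (f : ℤ → M) :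
    ∑ s ∈ motzkinSteps, f (maxStep s) = 4 • f 1 + 2 • f 0 + f (-1) := by
  rw [Finset.sum_comp, show motzkinSteps.image maxStep = {1, 0, -1} by decide,
    Finset.sum_insert (by decide), Finset.sum_insert (by decide), Finset.sum_singleton,
    show (motzkinSteps.filter (maxStep · = 1)).card = 4 by decide,
    show (motzkinSteps.filter (maxStep · = 0)).card = 2 by decide,
    show (motzkinSteps.filter (maxStep · = -1)).card = 1 by decide, one_smul, add_assoc]

lemma IsMeanderW.mono {v u : List ℤ} (hvu : List.Forall₂ (· ≤ ·) v u) (hv : IsMeanderW v) :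
    IsMeanderW u := fun n =>
  (hv n).trans (List.forall₂_take n hvu).sum_le_sum

lemma isMeanderW_singleton {a : ℤ} : IsMeanderW [a] ↔ 0 ≤ a := by
  refine ⟨fun h => by simpa using h 1, fun h n => ?_⟩
  cases n <;> simp [h]

lemma isMeanderW_cons_cons {a b : ℤ} {v : List ℤ} :
    IsMeanderW (a :: b :: v) ↔ 0 ≤ a ∧ IsMeanderW ((a + b) :: v) := by
  refine ⟨fun h => ⟨by simpa using h 1, fun n => ?_⟩, fun ⟨ha, h⟩ n => ?_⟩
  · cases n with
    | zero => simp
    | succ n => simpa [add_assoc] using h (n + 2)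
  · match n with
    | 0 => simp
    | 1 => simpa using ha
    | n + 2 => simpa [add_assoc] using h (n + 1)

lemma isMeanderW_zero_cons {v : List ℤ} : IsMeanderW (0 :: v) ↔ IsMeanderW v := by
  refine ⟨fun h n => by simpa using h (n + 1), fun h n => ?_⟩
  cases n <;> simp [h _]

lemma Compatible.forall₂_le_map_maxStep {v : List ℤ} {w : List (Finset ℤ)} (hc : Compatible v w)
    (hw : ∀ s ∈ w, s ∈ motzkinSteps) : List.Forall₂ (· ≤ ·) v (w.map maxStep) := by
  induction hc with
  | nil => exact .nil
  | cons hx _ ih =>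
    exact .cons (le_maxStep (hw _ List.mem_cons_self) hx)
      (ih fun s hs => hw s (List.mem_cons_of_mem _ hs))

lemma isNMeander_iff {w : List (Finset ℤ)} (hw : IsMotzkinNWalk w) :
    IsNMeander w ↔ IsMeanderW (w.map maxStep) := by
  rw [isMotzkinNWalk_iff] at hw
  refine ⟨fun ⟨v, hc, hv⟩ => hv.mono (hc.forall₂_le_map_maxStep hw), fun h => ⟨_, ?_, h⟩⟩
  rw [Compatible, List.forall₂_map_left_iff, List.forall₂_same]
  exact fun s hs => maxStep_mem (hw s hs)

/-- Motzkin N-walks of length `n` whose greedy walk (always taking `maxStep`) started at height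
`h` stays nonnegative; empty when `h < 0`. -/
def meandersFrom : ℕ → ℤ → Finset (List (Finset ℤ))
  | 0, h => if 0 ≤ h then {[]} else ∅
  | n + 1, h => if 0 ≤ h then
      motzkinSteps.biUnion fun s => (meandersFrom n (h + maxStep s)).image (s :: ·)
    else ∅

lemma mem_meandersFrom {n : ℕ} {h : ℤ} {w : List (Finset ℤ)} :
    w ∈ meandersFrom n h ↔
      w.length = n ∧ IsMotzkinNWalk w ∧ IsMeanderW (h :: w.map maxStep) := by
  induction n generalizing h w with
  | zero =>
    rw [meandersFrom, List.length_eq_zero_iff]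
    split_ifs with hh <;>
      simp +contextual [hh, IsMotzkinNWalk, isMeanderW_singleton]
  | succ n ih =>
    rw [meandersFrom]
    split_ifs with hh
    · cases w with
      | nil => simp
      | cons s w =>
        simp only [Finset.mem_biUnion, Finset.mem_image, List.cons.injEq, List.length_cons,
          List.map_cons, isMeanderW_cons_cons, ih, Nat.add_right_cancel_iff, isMotzkinNWalk_iff,
          List.forall_mem_cons]
        constructor
        · rintro ⟨s, hs, w, ⟨hl, hw, hm⟩, rfl, rfl⟩
          exact ⟨hl, ⟨hs, hw⟩, hh, hm⟩
        · rintro ⟨hl, ⟨hs, hw⟩, -, hm⟩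
          exact ⟨s, hs, w, ⟨hl, hw, hm⟩, rfl, rfl⟩
    · simp only [Finset.notMem_empty, false_iff]
      exact fun ⟨_, _, hm⟩ => hh (by simpa using hm 1)

lemma motzkinMeanderCount_eq_card (n : ℕ) : motzkinMeanderCount n = (meandersFrom n 0).card := by
  rw [← Nat.card_eq_finsetCard]
  refine Nat.card_congr (Equiv.subtypeEquivRight fun w => ?_)
  rw [mem_meandersFrom, isMeanderW_zero_cons]
  exact ⟨fun ⟨hl, hw, hm⟩ => ⟨hl, hw, (isNMeander_iff hw).mp hm⟩,
    fun ⟨hl, hw, hm⟩ => ⟨hl, hw, (isNMeander_iff hw).mpr hm⟩⟩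

lemma card_meandersFrom_zero {h : ℤ} (hh : 0 ≤ h) : (meandersFrom 0 h).card = 1 := by
  simp [meandersFrom, hh]

lemma meandersFrom_of_neg (n : ℕ) {h : ℤ} (hh : h < 0) : meandersFrom n h = ∅ := by
  cases n <;> simp [meandersFrom, hh.not_ge]

lemma card_meandersFrom_succ (n : ℕ) {h : ℤ} (hh : 0 ≤ h) :
    (meandersFrom (n + 1) h).card = 4 * (meandersFrom n (h + 1)).card +
      2 * (meandersFrom n h).card + (meandersFrom n (h - 1)).card := by
  rw [meandersFrom, if_pos hh, Finset.card_biUnion]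
  · simp only [Finset.card_image_of_injective _ (List.cons_injective)]
    rw [sum_motzkinSteps_maxStep (fun d => (meandersFrom n (h + d)).card)]
    simp [sub_eq_add_neg]
  · intro s _ s' _ hss'
    simp only [Finset.disjoint_left, Finset.mem_image]
    rintro _ ⟨w, -, rfl⟩ ⟨w', -, hw'⟩
    exact hss' (List.cons.inj hw').1.symm

lemma card_meandersFrom_le (n : ℕ) (h : ℤ) : (meandersFrom n h).card ≤ 7 ^ n := by
  induction n generalizing h with
  | zero => unfold meandersFrom; split_ifs <;> simp
  | succ n ih =>
    rcases lt_or_ge h 0 with hh | hh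
    · simp [meandersFrom_of_neg _ hh]
    · rw [card_meandersFrom_succ n hh, pow_succ]
      linarith [ih (h + 1), ih h, ih (h - 1)]

lemma eq_mul_pow_of_bounded_of_recurrence {x : ℕ → ℝ} {lam mu M : ℝ} (hlam : |lam| ≤ 1)
    (hmu : 1 < |mu|) (hrec : ∀ k, x (k + 2) = (lam + mu) * x (k + 1) - lam * mu * x k)
    (hM : ∀ k, |x k| ≤ M) (k : ℕ) : x k = x 0 * lam ^ k := by
  -- `y k = x (k+1) - lam * x k` is geometric with ratio `mu`, and bounded, hence zero.
  set y : ℕ → ℝ := fun k => x (k + 1) - lam * x k with hy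
  have hy_geom : ∀ k, y k = y 0 * mu ^ k := by
    intro k
    induction k with
    | zero => simp
    | succ k ih =>
      rw [pow_succ, ← mul_assoc, ← ih]
      simp only [hy, hrec]
      ring
  have hy_bdd : ∀ k, |y k| ≤ 2 * M := fun k =>
    calc |y k| ≤ |x (k + 1)| + |lam| * |x k| := by
          simpa only [abs_mul] using abs_sub (x (k + 1)) (lam * x k)
      _ ≤ M + 1 * M := add_le_add (hM _) (mul_le_mul hlam (hM k) (abs_nonneg _) zero_le_one)
      _ = 2 * M := by ring
  have hy0 : y 0 = 0 := by
    by_contra hne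
    have hpos : 0 < |y 0| := abs_pos.mpr hne
    obtain ⟨k, hk⟩ := pow_unbounded_of_one_lt (2 * M / |y 0|) hmu
    have := hy_bdd k
    rw [hy_geom k, abs_mul, abs_pow] at this
    rw [div_lt_iff₀ hpos] at hk
    linarith
  induction k with
  | zero => simp
  | succ k ih =>
    have : y k = 0 := by rw [hy_geom, hy0, zero_mul]
    rw [pow_succ, ← mul_assoc, ← ih]
    linear_combination this

noncomputable def meanderGF (t : ℝ) (h : ℤ) : ℝ := ∑' n, ((meandersFrom n h).card : ℝ) * t ^ n

section
variable {t : ℝ}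

lemma summable_meandersFrom (ht0 : 0 ≤ t) (ht7 : t < 1 / 7) (h : ℤ) :
    Summable fun n => ((meandersFrom n h).card : ℝ) * t ^ n := by
  refine .of_nonneg_of_le (fun n => by positivity) (fun n => ?_)
    (summable_geometric_of_lt_one (by positivity) (by linarith : 7 * t < 1))
  rw [mul_pow]
  gcongr
  exact_mod_cast card_meandersFrom_le n h

lemma meanderGF_nonneg (ht0 : 0 ≤ t) (h : ℤ) : 0 ≤ meanderGF t h :=
  tsum_nonneg fun n => by positivity

lemma meanderGF_le (ht0 : 0 ≤ t) (ht7 : t < 1 / 7) (h : ℤ) : meanderGF t h ≤ (1 - 7 * t)⁻¹ := by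
  rw [← tsum_geometric_of_lt_one (by positivity) (by linarith : 7 * t < 1)]
  refine (summable_meandersFrom ht0 ht7 h).tsum_le_tsum (fun n => ?_)
    (summable_geometric_of_lt_one (by positivity) (by linarith))
  rw [mul_pow]
  gcongr
  exact_mod_cast card_meandersFrom_le n h

lemma meanderGF_of_neg {h : ℤ} (hh : h < 0) : meanderGF t h = 0 := by
  simp [meanderGF, meandersFrom_of_neg _ hh]

lemma meanderGF_eq (ht0 : 0 ≤ t) (ht7 : t < 1 / 7) {h : ℤ} (hh : 0 ≤ h) :
    meanderGF t h =
      1 + t * (4 * meanderGF t (h + 1) + 2 * meanderGF t h + meanderGF t (h - 1)) := by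
  have hs := fun h => summable_meandersFrom ht0 ht7 h
  have hrhs := (((hs (h + 1)).hasSum.mul_left 4).add ((hs h).hasSum.mul_left 2)
    |>.add (hs (h - 1)).hasSum).mul_left t
  calc meanderGF t h = ((meandersFrom 0 h).card : ℝ) * t ^ 0 +
        ∑' n, ((meandersFrom (n + 1) h).card : ℝ) * t ^ (n + 1) := (hs h).tsum_eq_zero_add
    _ = _ := by
      rw [card_meandersFrom_zero hh, meanderGF, meanderGF, meanderGF, ← hrhs.tsum_eq]
      simp only [card_meandersFrom_succ _ hh]
      push_cast
      ring_nf

end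

/-- The two roots of the kernel `t (4 z² + 2 z + 1) = z` of the step weights `4, 2, 1`. -/
noncomputable def kernelRootSmall (t : ℝ) : ℝ :=
  (1 - 2 * t - √((1 + 2 * t) * (1 - 6 * t))) / (8 * t)

noncomputable def kernelRootLarge (t : ℝ) : ℝ :=
  (1 - 2 * t + √((1 + 2 * t) * (1 - 6 * t))) / (8 * t)

section
variable {t : ℝ}

lemma sq_sqrt_kernel_discr (ht0 : 0 ≤ t) (ht6 : t ≤ 1 / 6) :
    √((1 + 2 * t) * (1 - 6 * t)) ^ 2 = (1 + 2 * t) * (1 - 6 * t) :=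
  Real.sq_sqrt (by nlinarith)

lemma abs_kernelRootSmall_le_one (ht0 : 0 < t) (ht6 : t ≤ 1 / 6) : |kernelRootSmall t| ≤ 1 := by
  have hS := sq_sqrt_kernel_discr ht0.le ht6
  have hS0 := Real.sqrt_nonneg ((1 + 2 * t) * (1 - 6 * t))
  rw [kernelRootSmall, abs_le, le_div_iff₀ (by positivity), div_le_iff₀ (by positivity)]
  constructor <;> nlinarith

lemma one_lt_abs_kernelRootLarge (ht0 : 0 < t) (ht7 : t < 1 / 7) : 1 < |kernelRootLarge t| := by
  have hS := sq_sqrt_kernel_discr ht0.le (by linarith)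
  have hS0 := Real.sqrt_nonneg ((1 + 2 * t) * (1 - 6 * t))
  refine lt_of_lt_of_le ?_ (le_abs_self _)
  rw [kernelRootLarge, lt_div_iff₀ (by positivity)]
  nlinarith

lemma kernelRootSmall_add_kernelRootLarge (ht : t ≠ 0) :
    kernelRootSmall t + kernelRootLarge t = (1 - 2 * t) / (4 * t) := by
  rw [kernelRootSmall, kernelRootLarge]
  field_simp
  ring

lemma kernelRootSmall_mul_kernelRootLarge (ht0 : 0 < t) (ht6 : t ≤ 1 / 6) :
    kernelRootSmall t * kernelRootLarge t = 1 / 4 := by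
  have hS := sq_sqrt_kernel_discr ht0.le ht6
  rw [kernelRootSmall, kernelRootLarge]
  generalize √((1 + 2 * t) * (1 - 6 * t)) = S at hS ⊢
  field_simp
  linear_combination -4 * hS

/-- Subtracting the constant solution `(1 - 7t)⁻¹` and shifting by one makes the recurrence of
`meanderGF` homogeneous, with the boundary value at height `-1` built in. -/
lemma meanderGF_sub_recurrence (ht0 : 0 < t) (ht7 : t < 1 / 7) (k : ℕ) :
    let x : ℕ → ℝ := fun k => meanderGF t (k - 1) - (1 - 7 * t)⁻¹
    x (k + 2) = (kernelRootSmall t + kernelRootLarge t) * x (k + 1) -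
      kernelRootSmall t * kernelRootLarge t * x k := by
  intro x
  have hG := meanderGF_eq ht0.le ht7 (Int.natCast_nonneg k)
  have hP : (1 - 7 * t)⁻¹ = 1 + 7 * t * (1 - 7 * t)⁻¹ := by
    field_simp [show 1 - 7 * t ≠ 0 by linarith]
    ring
  simp only [x, kernelRootSmall_add_kernelRootLarge ht0.ne',
    kernelRootSmall_mul_kernelRootLarge ht0 (by linarith)]
  push_cast
  rw [show (k : ℤ) + 2 - 1 = k + 1 by ring, show (k : ℤ) + 1 - 1 = k by ring]
  field_simp
  linear_combination hP - hG

end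

/-- with all weights 1, the generating function of Motzkin N-meanders is
(10t - 1 + √((1+2t)(1-6t))) / (8t(1-7t)). -/
theorem motzkin_meander_gf :
    ∀ t : ℝ, 0 < t → t < 1 / 7 →
      HasSum (fun n : ℕ => (motzkinMeanderCount n : ℝ) * t ^ n)
        ((10 * t - 1 + Real.sqrt ((1 + 2 * t) * (1 - 6 * t))) / (8 * t * (1 - 7 * t))) := by
  intro t ht0 ht7
  have hx_bdd : ∀ k : ℕ, |meanderGF t (k - 1) - (1 - 7 * t)⁻¹| ≤ (1 - 7 * t)⁻¹ := fun k => by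
    rw [abs_le]
    constructor <;> linarith [meanderGF_nonneg ht0.le (k - 1), meanderGF_le ht0.le ht7 (k - 1)]
  have hx := eq_mul_pow_of_bounded_of_recurrence (abs_kernelRootSmall_le_one ht0 (by linarith))
    (one_lt_abs_kernelRootLarge ht0 ht7) (meanderGF_sub_recurrence ht0 ht7) hx_bdd 1
  have hG : meanderGF t 0 = (1 - 7 * t)⁻¹ * (1 - kernelRootSmall t) := by
    simp only [Nat.cast_one, sub_self, Nat.cast_zero, zero_sub,
      meanderGF_of_neg neg_one_lt_zero, pow_one] at hx
    linear_combination hx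
  simp only [motzkinMeanderCount_eq_card]
  convert (summable_meandersFrom ht0.le ht7 0).hasSum using 1
  rw [← meanderGF, hG, kernelRootSmall]
  field_simp [show 1 - 7 * t ≠ 0 by linarith]
  ring
end
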